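/- arXiv:1411.7694 — 3 statements merged into one kernel-verified Lean document; each statement's English description precedes it below -/
import Mathlib

section
/- Let θ > 0 and let x₁, …, xₙ ∈ ℝ × [0,∞) be any finite sample of intervals. Then the function (y,z) ↦ (1/n)·∑_{i=1}^n sqrt((mid xᵢ − y)² + θ·(spr xᵢ − z)²) attains its minimum over ℝ × [0,∞); that is, a sample d_θ-median always exists. -/
/-- For `θ > 0` and any finite sample `x₁, …, xₙ ∈ ℝ × [0,∞)`, the function
`(y,z) ↦ (1/n) ∑ᵢ sqrt((mid xᵢ − y)² + θ·(spr xᵢ − z)²)` attains its minimum over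
`ℝ × [0,∞)`: a sample `d_θ`-median always exists. -/
theorem sample_dTheta_median_exists
    (θ : ℝ) (hθ : 0 < θ) (n : ℕ)
    (x : Fin n → ℝ × ℝ) (hx : ∀ i, 0 ≤ (x i).2) :
    ∃ m : ℝ × ℝ, 0 ≤ m.2 ∧ ∀ p : ℝ × ℝ, 0 ≤ p.2 →
      (1 / (n : ℝ)) * ∑ i, Real.sqrt (((x i).1 - m.1) ^ 2 + θ * ((x i).2 - m.2) ^ 2)
        ≤ (1 / (n : ℝ)) * ∑ i, Real.sqrt (((x i).1 - p.1) ^ 2 + θ * ((x i).2 - p.2) ^ 2) := by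
  rcases Nat.eq_zero_or_pos n with hn | hn
  · subst hn
    exact ⟨(0, 0), le_refl 0, fun p hp => by simp⟩
  set g : ℝ × ℝ → ℝ := fun p => ∑ i, Real.sqrt (((x i).1 - p.1) ^ 2 + θ * ((x i).2 - p.2) ^ 2)
    with hg
  have hgcont : Continuous g := by
    apply continuous_finset_sum
    intro i _
    exact (Real.continuous_sqrt).comp (by fun_prop)
  set i0 : Fin n := ⟨0, hn⟩
  set c : ℝ := min 1 (Real.sqrt θ) with hc
  have hc0 : 0 < c := lt_min one_pos (Real.sqrt_pos.2 hθ)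
  -- each summand is nonnegative
  have hterm_nonneg : ∀ (i : Fin n) (p : ℝ × ℝ),
      0 ≤ Real.sqrt (((x i).1 - p.1) ^ 2 + θ * ((x i).2 - p.2) ^ 2) :=
    fun i p => Real.sqrt_nonneg _
  -- key lower bound: c * dist p (x i0) ≤ g p
  have hkey : ∀ p : ℝ × ℝ, c * dist p (x i0) ≤ g p := by
    intro p
    have h1 : c * dist p (x i0)
        ≤ Real.sqrt (((x i0).1 - p.1) ^ 2 + θ * ((x i0).2 - p.2) ^ 2) := by
      rw [Prod.dist_eq]
      rcases max_le_iff.mp (le_refl (max (dist p.1 (x i0).1) (dist p.2 (x i0).2))) with ⟨_, _⟩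
      rw [mul_max_of_nonneg _ _ hc0.le]
      apply max_le
      · calc c * dist p.1 (x i0).1 ≤ 1 * dist p.1 (x i0).1 :=
              mul_le_mul_of_nonneg_right (min_le_left _ _) dist_nonneg
          _ = Real.sqrt (((x i0).1 - p.1) ^ 2) := by
              rw [one_mul, Real.sqrt_sq_eq_abs, Real.dist_eq, abs_sub_comm]
          _ ≤ _ := Real.sqrt_le_sqrt (by nlinarith [sq_nonneg ((x i0).2 - p.2)])
      · calc c * dist p.2 (x i0).2 ≤ Real.sqrt θ * dist p.2 (x i0).2 :=
              mul_le_mul_of_nonneg_right (min_le_right _ _) dist_nonneg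
          _ = Real.sqrt (θ * ((x i0).2 - p.2) ^ 2) := by
              rw [Real.dist_eq, abs_sub_comm, Real.sqrt_mul hθ.le, Real.sqrt_sq_eq_abs]
          _ ≤ _ := Real.sqrt_le_sqrt (by nlinarith [sq_nonneg ((x i0).1 - p.1)])
    calc c * dist p (x i0) ≤ _ := h1
      _ ≤ g p := Finset.single_le_sum (fun i _ => hterm_nonneg i p) (Finset.mem_univ i0)
  -- the sublevel set within the half-plane
  set S : Set (ℝ × ℝ) := {p | 0 ≤ p.2 ∧ g p ≤ g (x i0)} with hS
  have hx0S : x i0 ∈ S := ⟨hx i0, le_refl _⟩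
  have hSclosed : IsClosed S := by
    have h1 : IsClosed {p : ℝ × ℝ | 0 ≤ p.2} := isClosed_le continuous_const continuous_snd
    have h2 : IsClosed {p : ℝ × ℝ | g p ≤ g (x i0)} := isClosed_le hgcont continuous_const
    exact h1.inter h2
  have hSbdd : Bornology.IsBounded S := by
    apply (Metric.isBounded_closedBall (x := x i0) (r := g (x i0) / c)).subset
    intro p hp
    rw [Metric.mem_closedBall]
    rw [le_div_iff₀ hc0]
    calc dist p (x i0) * c = c * dist p (x i0) := mul_comm _ _
      _ ≤ g p := hkey p
      _ ≤ g (x i0) := hp.2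
  have hScompact : IsCompact S := Metric.isCompact_of_isClosed_isBounded hSclosed hSbdd
  obtain ⟨m, hmS, hmin⟩ := hScompact.exists_isMinOn ⟨x i0, hx0S⟩ hgcont.continuousOn
  refine ⟨m, hmS.1, fun p hp => ?_⟩
  have hninv : (0:ℝ) ≤ 1 / (n:ℝ) := by positivity
  apply mul_le_mul_of_nonneg_left _ hninv
  rcases le_or_gt (g p) (g (x i0)) with h | h
  · exact hmin ⟨hp, h⟩
  · exact le_trans (hmin hx0S) h.le
end

section
/- Let θ > 0 and let x₁, …, xₙ ∈ ℝ × [0,∞) be a sample of intervals such that the two-dimensional points (mid x₁, spr x₁), …, (mid xₙ, spr xₙ) are not all contained in a single straight line of ℝ². Then the sample d_θ-median is unique, i.e. the function (y,z) ↦ (1/n)·∑_{i=1}^n sqrt((mid xᵢ − y)² + θ·(spr xᵢ − z)²) has exactly one minimizer over ℝ × [0,∞). -/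
/-!
The linear map `(y, z) ↦ y + √θ z i` from `ℝ²` to `ℂ` is injective and turns `d_θ` into the
Euclidean distance, so the objective is a sum of Euclidean distances to sample points. The
distance to a point is convex, and strictly convex along every segment whose line misses that
point; when the sample points are not collinear every segment misses one of them, so the sum is
strictly convex. It is also coercive, hence it has exactly one minimizer on the closed convex
half-plane `z ≥ 0`.
-/

open Filter Function

section SumNorm

variable {F E ι : Type*} [NormedAddCommGroup F] [NormedSpace ℝ F]
  [NormedAddCommGroup E] [NormedSpace ℝ E] [Fintype ι]

theorem norm_smul_add_smul_lt_of_not_sameRay [StrictConvexSpace ℝ E] {u v : E}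
    (h : ¬SameRay ℝ u v) {α β : ℝ} (hα : 0 < α) (hβ : 0 < β) :
    ‖α • u + β • v‖ < α * ‖u‖ + β * ‖v‖ := by
  have h' : ¬SameRay ℝ (α • u) (β • v) := fun h' => h <| by
    simpa [smul_smul, hα.ne', hβ.ne'] using
      (h'.pos_smul_left (inv_pos.2 hα)).pos_smul_right (inv_pos.2 hβ)
  calc ‖α • u + β • v‖ < ‖α • u‖ + ‖β • v‖ := norm_add_lt_of_not_sameRay h'
    _ = α * ‖u‖ + β * ‖v‖ := by rw [norm_smul_of_nonneg hα.le, norm_smul_of_nonneg hβ.le]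

theorem strictConvexOn_sum_norm_sub [StrictConvexSpace ℝ E] {s : Set F} (hs : Convex ℝ s)
    {f : F →ₗ[ℝ] E} (hf : Injective f) {a : ι → F}
    (ha : ∀ p ∈ s, ∀ q ∈ s, p ≠ q → ∃ i, ¬SameRay ℝ (a i - p) (a i - q)) :
    StrictConvexOn ℝ s fun p => ∑ i, ‖f (a i - p)‖ := by
  refine ⟨hs, fun p hp q hq hpq α β hα hβ hαβ => ?_⟩
  obtain ⟨j, hj⟩ := ha p hp q hq hpq
  obtain rfl : β = 1 - α := by linarith
  have hsplit : ∀ i, f (a i - (α • p + (1 - α) • q)) = α • f (a i - p) + (1 - α) • f (a i - q) :=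
    fun i => by rw [← map_smul, ← map_smul, ← map_add]; congr 1; module
  calc ∑ i, ‖f (a i - (α • p + (1 - α) • q))‖
      < ∑ i, (α * ‖f (a i - p)‖ + (1 - α) * ‖f (a i - q)‖) := by
        refine Finset.sum_lt_sum (fun i _ => ?_) ⟨j, Finset.mem_univ j, ?_⟩ <;> rw [hsplit]
        · refine (norm_add_le _ _).trans_eq ?_
          rw [norm_smul_of_nonneg hα.le, norm_smul_of_nonneg hβ.le]
        · exact norm_smul_add_smul_lt_of_not_sameRay (hf.sameRay_map_iff.not.2 hj) hα hβ
    _ = α • ∑ i, ‖f (a i - p)‖ + (1 - α) • ∑ i, ‖f (a i - q)‖ := by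
        simp only [smul_eq_mul, Finset.mul_sum, Finset.sum_add_distrib]

theorem tendsto_norm_map_sub_cocompact [FiniteDimensional ℝ F] {f : F →ₗ[ℝ] E}
    (hf : Injective f) (a : F) : Tendsto (fun p => ‖f (a - p)‖) (cocompact F) atTop := by
  obtain ⟨K, hK, hfK⟩ := f.exists_antilipschitzWith (LinearMap.ker_eq_bot.2 hf)
  refine tendsto_atTop_mono (fun p => ?_)
    ((tendsto_dist_right_cocompact_atTop a).atTop_div_const (NNReal.coe_pos.2 hK))
  rw [div_le_iff₀ (NNReal.coe_pos.2 hK), mul_comm, map_sub, norm_sub_rev, ← dist_eq_norm]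
  exact hfK.le_mul_dist p a

theorem exists_isMinOn_sum_norm_sub [FiniteDimensional ℝ F] [Nonempty ι] {s : Set F}
    (hs : IsClosed s) (hne : s.Nonempty) {f : F →ₗ[ℝ] E} (hf : Injective f) (a : ι → F) :
    ∃ m ∈ s, IsMinOn (fun p => ∑ i, ‖f (a i - p)‖) s m := by
  obtain ⟨p₀, hp₀⟩ := hne
  obtain ⟨j⟩ := ‹Nonempty ι›
  have hcont : Continuous f := f.continuous_of_finiteDimensional
  have htend : Tendsto (fun p => ∑ i, ‖f (a i - p)‖) (cocompact F) atTop :=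
    tendsto_atTop_mono (fun p => Finset.single_le_sum (fun i _ => norm_nonneg _)
      (Finset.mem_univ j)) (tendsto_norm_map_sub_cocompact hf (a j))
  exact ContinuousOn.exists_isMinOn' (by fun_prop) hs hp₀
    ((htend.eventually_ge_atTop _).filter_mono inf_le_left)

theorem existsUnique_isMinOn_sum_norm_sub [StrictConvexSpace ℝ E] [FiniteDimensional ℝ F]
    [Nonempty ι] {s : Set F} (hs : Convex ℝ s) (hsc : IsClosed s) (hne : s.Nonempty)
    {f : F →ₗ[ℝ] E} (hf : Injective f) {a : ι → F}
    (ha : ∀ p ∈ s, ∀ q ∈ s, p ≠ q → ∃ i, ¬SameRay ℝ (a i - p) (a i - q)) :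
    ∃! m, m ∈ s ∧ IsMinOn (fun p => ∑ i, ‖f (a i - p)‖) s m := by
  obtain ⟨m, hm, hmin⟩ := exists_isMinOn_sum_norm_sub hsc hne hf a
  exact ⟨m, ⟨hm, hmin⟩, fun m' ⟨hm', hmin'⟩ =>
    (strictConvexOn_sum_norm_sub hs hf ha).eq_of_isMinOn hmin' hmin hm' hm⟩

end SumNorm

theorem SameRay.fst_mul_snd_eq {R : Type*} [CommRing R] [LinearOrder R] [IsStrictOrderedRing R]
    {u v : R × R} (h : SameRay R u v) : u.1 * v.2 = u.2 * v.1 := by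
  rcases h with rfl | rfl | ⟨r₁, r₂, hr₁, -, h⟩
  · simp
  · simp
  · have h₁ := congrArg Prod.fst h
    have h₂ := congrArg Prod.snd h
    simp only [Prod.smul_fst, Prod.smul_snd, smul_eq_mul] at h₁ h₂
    have : r₁ * (u.1 * v.2 - u.2 * v.1) = 0 := by linear_combination v.2 * h₁ - v.1 * h₂
    linear_combination (mul_eq_zero.1 this).resolve_left hr₁.ne'

theorem exists_not_sameRay_of_not_collinear {ι : Type*} {x : ι → ℝ × ℝ}
    (hx : ¬∃ a b c : ℝ, (a, b) ≠ ((0 : ℝ), (0 : ℝ)) ∧ ∀ i, a * (x i).1 + b * (x i).2 = c)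
    {p q : ℝ × ℝ} (hpq : p ≠ q) : ∃ i, ¬SameRay ℝ (x i - p) (x i - q) := by
  by_contra! h
  refine hx ⟨p.2 - q.2, q.1 - p.1, p.2 * q.1 - p.1 * q.2, fun hab => hpq ?_, fun i => ?_⟩
  · simp only [Prod.mk.injEq, sub_eq_zero] at hab
    exact Prod.ext hab.2.symm hab.1
  · have := (h i).fst_mul_snd_eq
    simp only [Prod.fst_sub, Prod.snd_sub] at this
    linear_combination this

noncomputable def dThetaToComplex (θ : ℝ) : ℝ × ℝ →ₗ[ℝ] ℂ where
  toFun p := ⟨p.1, √θ * p.2⟩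
  map_add' p q := by apply Complex.ext <;> simp [mul_add]
  map_smul' c p := by apply Complex.ext <;> simp [mul_left_comm]

theorem dThetaToComplex_injective {θ : ℝ} (hθ : 0 < θ) : Injective (dThetaToComplex θ) := by
  intro p q h
  have h₁ := congrArg Complex.re h
  have h₂ := congrArg Complex.im h
  simp only [dThetaToComplex, LinearMap.coe_mk, AddHom.coe_mk] at h₁ h₂
  exact Prod.ext h₁ (mul_left_cancel₀ (Real.sqrt_pos.2 hθ).ne' h₂)

theorem norm_dThetaToComplex {θ : ℝ} (hθ : 0 ≤ θ) (p : ℝ × ℝ) :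
    ‖dThetaToComplex θ p‖ = √(p.1 ^ 2 + θ * p.2 ^ 2) := by
  simp only [dThetaToComplex, LinearMap.coe_mk, AddHom.coe_mk, Complex.norm_def,
    Complex.normSq_mk]
  congr 1
  rw [mul_mul_mul_comm, Real.mul_self_sqrt hθ]
  ring

theorem sample_dTheta_median_unique_general
    (θ : ℝ) (hθ : 0 < θ) (n : ℕ)
    (x : Fin n → ℝ × ℝ)
    (hnotline : ¬ ∃ a b c : ℝ, (a, b) ≠ ((0 : ℝ), (0 : ℝ)) ∧
      ∀ i, a * (x i).1 + b * (x i).2 = c) :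
    ∃! m : ℝ × ℝ, 0 ≤ m.2 ∧ ∀ p : ℝ × ℝ, 0 ≤ p.2 →
      (1 / (n : ℝ)) * ∑ i, Real.sqrt (((x i).1 - m.1) ^ 2 + θ * ((x i).2 - m.2) ^ 2)
        ≤ (1 / (n : ℝ)) * ∑ i, Real.sqrt (((x i).1 - p.1) ^ 2 + θ * ((x i).2 - p.2) ^ 2) := by
  have hn : 0 < n := Nat.pos_of_ne_zero fun h => hnotline ⟨1, 0, 0, by simp, fun i => (h ▸ i).elim0⟩
  have : Nonempty (Fin n) := ⟨⟨0, hn⟩⟩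
  have hsum (p : ℝ × ℝ) : ∑ i, √(((x i).1 - p.1) ^ 2 + θ * ((x i).2 - p.2) ^ 2) =
      ∑ i, ‖dThetaToComplex θ (x i - p)‖ := by
    simp only [norm_dThetaToComplex hθ.le, Prod.fst_sub, Prod.snd_sub]
  have hmedian := existsUnique_isMinOn_sum_norm_sub (s := {p : ℝ × ℝ | 0 ≤ p.2})
    (convex_halfSpace_ge (LinearMap.snd ℝ ℝ ℝ).isLinear 0)
    (isClosed_le continuous_const continuous_snd) ⟨0, le_refl (0 : ℝ)⟩
    (dThetaToComplex_injective hθ)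
    (fun _ _ _ _ hpq => exists_not_sameRay_of_not_collinear hnotline hpq)
  refine (existsUnique_congr fun m => ?_).2 hmedian
  simp only [hsum, mul_le_mul_iff_right₀ (by positivity : (0 : ℝ) < 1 / n), isMinOn_iff,
    Set.mem_ofPred_eq]

/-- If `θ > 0` and the sample points `(mid xᵢ, spr xᵢ) ∈ ℝ × [0,∞)` are not all contained
in a single straight line of `ℝ²`, then the function
`(y,z) ↦ (1/n) ∑ᵢ sqrt((mid xᵢ − y)² + θ·(spr xᵢ − z)²)` has exactly one minimizer over
`ℝ × [0,∞)`: the sample `d_θ`-median is unique. -/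
theorem sample_dTheta_median_unique
    (θ : ℝ) (hθ : 0 < θ) (n : ℕ)
    (x : Fin n → ℝ × ℝ) (hx : ∀ i, 0 ≤ (x i).2)
    (hnotline : ¬ ∃ a b c : ℝ, (a, b) ≠ ((0 : ℝ), (0 : ℝ)) ∧
      ∀ i, a * (x i).1 + b * (x i).2 = c) :
    ∃! m : ℝ × ℝ, 0 ≤ m.2 ∧ ∀ p : ℝ × ℝ, 0 ≤ p.2 →
      (1 / (n : ℝ)) * ∑ i, Real.sqrt (((x i).1 - m.1) ^ 2 + θ * ((x i).2 - m.2) ^ 2)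
        ≤ (1 / (n : ℝ)) * ∑ i, Real.sqrt (((x i).1 - p.1) ^ 2 + θ * ((x i).2 - p.2) ^ 2) :=
  sample_dTheta_median_unique_general θ hθ n x hnotline
end

section
/- Let θ > 0 and let xₙ = (x₁, …, xₙ) be a sample of intervals in ℝ × [0,∞). For k ∈ {0, 1, …, n}, let 𝒴_k denote the set of samples of size n obtained from xₙ by replacing at most k of its points by arbitrary elements of ℝ × [0,∞). Then the finite sample breakdown point of the sample d_θ-median equals (1/n)·⌊(n+1)/2⌋; that is: (i) for every k < ⌊(n+1)/2⌋, sup over all y ∈ 𝒴_k and all sample d_θ-medians m(y) of y of d_θ(m(xₙ), m(y)) is finite (for any fixed choice of sample d_θ-median m(xₙ) of xₙ), and (ii) for k = ⌊(n+1)/2⌋ this supremum is infinite. -/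
/-- The `d_θ` metric on intervals identified with pairs (mid, spr) ∈ ℝ × [0,∞). -/
noncomputable def dTheta (θ : ℝ) (p q : ℝ × ℝ) : ℝ :=
  Real.sqrt ((p.1 - q.1) ^ 2 + θ * (p.2 - q.2) ^ 2)

/-- `m` is a sample `d_θ`-median of the sample `x = (x₁,…,xₙ)` of intervals: it minimizes
`(y,z) ↦ (1/n) ∑ᵢ d_θ(xᵢ,(y,z))` over `ℝ × [0,∞)`. -/
def IsSampleDThetaMedian (θ : ℝ) {n : ℕ} (x : Fin n → ℝ × ℝ) (m : ℝ × ℝ) : Prop :=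
  0 ≤ m.2 ∧ ∀ p : ℝ × ℝ, 0 ≤ p.2 →
    (1 / (n : ℝ)) * ∑ i, dTheta θ (x i) m ≤ (1 / (n : ℝ)) * ∑ i, dTheta θ (x i) p

/-- `y ∈ 𝒴_k`: the sample `y` of intervals is obtained from `x` by replacing at most `k`
of its `n` points by arbitrary elements of `ℝ × [0,∞)`. -/
def IsContaminatedSample {n : ℕ} (k : ℕ) (x y : Fin n → ℝ × ℝ) : Prop :=
  (∀ i, 0 ≤ (y i).2) ∧ (Finset.univ.filter fun i => y i ≠ x i).card ≤ k

/-!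
Under `(mid, spr) ↦ mid + i √θ spr`, `d_θ` becomes the distance of `ℂ`, so the theorem reduces to
two facts about `p ↦ ∑ᵢ dist yᵢ p` in a pseudometric space. If `m` minimizes it over a set
containing `a`, and `y` differs from `x` only on `B`, the triangle inequality termwise gives
`(n - 2 #B) · dist a m ≤ 2 ∑ᵢ dist xᵢ a`: with fewer than half of the points replaced, every median
stays within `2 ∑ᵢ d_θ(xᵢ, m₀)` of `m₀`. Conversely, a point carried by at least half of the sample
minimizes the sum, so moving `⌊(n+1)/2⌋` points to a far point `c` of `ℝ × {0}` makes `c` a median.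
-/

open Finset

section
variable {α ι : Type*} [PseudoMetricSpace α] [Fintype ι]

theorem card_sub_two_mul_card_mul_dist_le_two_mul_sum_dist {x y : ι → α} {a m : α}
    {B : Finset ι} (hB : ∀ i ∉ B, y i = x i)
    (hm : ∑ i, dist (y i) m ≤ ∑ i, dist (y i) a) :
    (Fintype.card ι - 2 * #B : ℝ) * dist a m ≤ 2 * ∑ i, dist (x i) a := by
  classical
  have hterm (i : ι) : dist a m - (if i ∈ B then 2 * dist a m else 0) - 2 * dist (x i) a ≤
      dist (y i) m - dist (y i) a := by
    by_cases hi : i ∈ B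
    · simp only [hi, if_true]
      linarith [dist_triangle (y i) m a, dist_comm m a, dist_nonneg (x := x i) (y := a)]
    · simp only [hi, if_false, hB i hi, sub_zero]
      linarith [dist_triangle_left a m (x i), dist_comm a (x i)]
  have hsum := Finset.sum_le_sum fun i (_ : i ∈ univ) => hterm i
  simp only [Finset.sum_sub_distrib, Fintype.sum_ite_mem, sum_const, card_univ,
    nsmul_eq_mul, ← Finset.mul_sum] at hsum
  linarith

theorem sum_dist_le_sum_dist_of_two_mul_card_le {y : ι → α} {c : α} {B : Finset ι}
    (hB : ∀ i ∉ B, y i = c) (hcard : 2 * #B ≤ Fintype.card ι) (p : α) :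
    ∑ i, dist (y i) c ≤ ∑ i, dist (y i) p := by
  classical
  have hterm (i : ι) : dist (y i) c + dist c p ≤
      dist (y i) p + (if i ∈ B then 2 * dist c p else 0) := by
    by_cases hi : i ∈ B
    · simp only [hi, if_true]
      linarith [dist_triangle (y i) p c, dist_comm p c]
    · simp [hi, hB i hi]
  have hsum := Finset.sum_le_sum fun i (_ : i ∈ univ) => hterm i
  simp only [Finset.sum_add_distrib, Fintype.sum_ite_mem, sum_const, card_univ,
    nsmul_eq_mul] at hsum
  have : (2 * #B : ℝ) ≤ Fintype.card ι := by exact_mod_cast hcard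
  nlinarith [dist_nonneg (x := c) (y := p)]

end

noncomputable def dThetaEmbedding (θ : ℝ) (p : ℝ × ℝ) : ℂ :=
  ⟨p.1, Real.sqrt θ * p.2⟩

theorem dTheta_eq_dist {θ : ℝ} (hθ : 0 ≤ θ) (p q : ℝ × ℝ) :
    dTheta θ p q = dist (dThetaEmbedding θ p) (dThetaEmbedding θ q) := by
  rw [Complex.dist_eq_re_im, dTheta]
  congr 1
  simp only [dThetaEmbedding]
  linear_combination -(p.2 - q.2) ^ 2 * Real.sq_sqrt hθ

theorem abs_fst_sub_le_dTheta {θ : ℝ} (hθ : 0 ≤ θ) (p q : ℝ × ℝ) :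
    |p.1 - q.1| ≤ dTheta θ p q :=
  Real.abs_le_sqrt (le_add_of_nonneg_right (by positivity))

section
variable {θ : ℝ} {n : ℕ}

theorem IsSampleDThetaMedian.sum_le {y : Fin n → ℝ × ℝ} {m : ℝ × ℝ}
    (hm : IsSampleDThetaMedian θ y m) {p : ℝ × ℝ} (hp : 0 ≤ p.2) :
    ∑ i, dTheta θ (y i) m ≤ ∑ i, dTheta θ (y i) p := by
  rcases n.eq_zero_or_pos with rfl | hn
  · simp
  · exact le_of_mul_le_mul_left (hm.2 p hp) (by positivity)

theorem isSampleDThetaMedian_of_sum_le {y : Fin n → ℝ × ℝ} {m : ℝ × ℝ} (hm : 0 ≤ m.2)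
    (h : ∀ p : ℝ × ℝ, 0 ≤ p.2 → ∑ i, dTheta θ (y i) m ≤ ∑ i, dTheta θ (y i) p) :
    IsSampleDThetaMedian θ y m :=
  ⟨hm, fun p hp => mul_le_mul_of_nonneg_left (h p hp) (by positivity)⟩

theorem dTheta_le_of_isContaminatedSample (hθ : 0 ≤ θ) {k : ℕ} (hk : 2 * k < n)
    {x y : Fin n → ℝ × ℝ} (hy : IsContaminatedSample k x y) {a m : ℝ × ℝ} (ha : 0 ≤ a.2)
    (hm : IsSampleDThetaMedian θ y m) :
    dTheta θ a m ≤ 2 * ∑ i, dTheta θ (x i) a := by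
  have key := card_sub_two_mul_card_mul_dist_le_two_mul_sum_dist
    (x := dThetaEmbedding θ ∘ x) (y := dThetaEmbedding θ ∘ y) (B := {i | y i ≠ x i})
    (fun i hi => congrArg (dThetaEmbedding θ) (by simpa using hi))
    (by simpa only [Function.comp_apply, dTheta_eq_dist hθ] using hm.sum_le ha)
  simp only [Function.comp_apply, ← dTheta_eq_dist hθ, Fintype.card_fin] at key
  have hcard : (1 : ℝ) ≤ n - 2 * #{i | y i ≠ x i} := by
    have : 2 * #{i | y i ≠ x i} + 1 ≤ n := by linarith [hy.2]
    have : (2 * #{i | y i ≠ x i} + 1 : ℝ) ≤ n := by exact_mod_cast this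
    linarith
  exact (le_mul_of_one_le_left (Real.sqrt_nonneg _) hcard).trans key

theorem isSampleDThetaMedian_piecewise (hθ : 0 ≤ θ) {s : Finset (Fin n)}
    (hs : n ≤ 2 * #s) (x : Fin n → ℝ × ℝ) {c : ℝ × ℝ} (hc : 0 ≤ c.2) :
    IsSampleDThetaMedian θ (s.piecewise (fun _ => c) x) c := by
  refine isSampleDThetaMedian_of_sum_le hc fun p _ => ?_
  simp only [dTheta_eq_dist hθ]
  refine sum_dist_le_sum_dist_of_two_mul_card_le (B := sᶜ)
    (fun i hi => by simp [notMem_compl.mp hi]) ?_ _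
  rw [card_compl, Fintype.card_fin]
  omega

theorem isContaminatedSample_piecewise {x : Fin n → ℝ × ℝ} (hx : ∀ i, 0 ≤ (x i).2)
    (s : Finset (Fin n)) {c : ℝ × ℝ} (hc : 0 ≤ c.2) :
    IsContaminatedSample #s x (s.piecewise (fun _ => c) x) := by
  refine ⟨fun i => ?_, card_le_card fun i => ?_⟩
  · by_cases hi : i ∈ s <;> simp [hi, hc, hx i]
  · contrapose
    simp +contextual

end

theorem sample_dTheta_median_fsbp_general
    (θ : ℝ) (hθ : 0 < θ) (n : ℕ)
    (x : Fin n → ℝ × ℝ) (hx : ∀ i, 0 ≤ (x i).2)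
    (m₀ : ℝ × ℝ) (hm₀ : IsSampleDThetaMedian θ x m₀) :
    (∀ k : ℕ, k < (n + 1) / 2 →
      ∃ C : ℝ, ∀ y : Fin n → ℝ × ℝ, IsContaminatedSample k x y →
        ∀ m : ℝ × ℝ, IsSampleDThetaMedian θ y m → dTheta θ m₀ m ≤ C) ∧
    (∀ C : ℝ, ∃ y : Fin n → ℝ × ℝ, IsContaminatedSample ((n + 1) / 2) x y ∧
      ∃ m : ℝ × ℝ, IsSampleDThetaMedian θ y m ∧ C < dTheta θ m₀ m) := by
  refine ⟨fun k hk => ⟨_, fun y hy m hm =>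
    dTheta_le_of_isContaminatedSample hθ.le (by omega) hy hm₀.1 hm⟩, fun C => ?_⟩
  obtain ⟨s, -, hs⟩ := exists_subset_card_eq (s := (univ : Finset (Fin n))) (n := (n + 1) / 2)
    (by rw [card_univ, Fintype.card_fin]; omega)
  set c : ℝ × ℝ := (m₀.1 + |C| + 1, 0)
  refine ⟨s.piecewise (fun _ => c) x, hs ▸ isContaminatedSample_piecewise hx s le_rfl, c,
    isSampleDThetaMedian_piecewise hθ.le (by omega) x le_rfl, ?_⟩
  calc C < |m₀.1 - c.1| := by
        rw [abs_sub_comm, show c.1 - m₀.1 = |C| + 1 by ring, abs_of_pos (by positivity)]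
        linarith [le_abs_self C]
    _ ≤ dTheta θ m₀ c := abs_fst_sub_le_dTheta hθ.le _ _

/-- The finite sample breakdown point of the sample `d_θ`-median at any sample `xₙ` of
intervals equals `(1/n)·⌊(n+1)/2⌋`: (i) replacing fewer than `⌊(n+1)/2⌋` points keeps all
sample `d_θ`-medians of the contaminated samples within a bounded `d_θ`-distance of the
sample `d_θ`-median of `xₙ`, while (ii) replacing `⌊(n+1)/2⌋` points allows the sample
`d_θ`-median to break down (the supremum of these distances is infinite). -/
theorem sample_dTheta_median_fsbp
    (θ : ℝ) (hθ : 0 < θ) (n : ℕ) (hn : 0 < n)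
    (x : Fin n → ℝ × ℝ) (hx : ∀ i, 0 ≤ (x i).2)
    (m₀ : ℝ × ℝ) (hm₀ : IsSampleDThetaMedian θ x m₀) :
    (∀ k : ℕ, k < (n + 1) / 2 →
      ∃ C : ℝ, ∀ y : Fin n → ℝ × ℝ, IsContaminatedSample k x y →
        ∀ m : ℝ × ℝ, IsSampleDThetaMedian θ y m → dTheta θ m₀ m ≤ C) ∧
    (∀ C : ℝ, ∃ y : Fin n → ℝ × ℝ, IsContaminatedSample ((n + 1) / 2) x y ∧
      ∃ m : ℝ × ℝ, IsSampleDThetaMedian θ y m ∧ C < dTheta θ m₀ m) :=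
  sample_dTheta_median_fsbp_general θ hθ n x hx m₀ hm₀
end
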